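/- Let u ∈ (0,∞)ⁿ with components linearly independent over ℚ, let ρ : ℝ → ℝ be 1 on [-1/2,1/2] and 0 outside [-1,1], and let p, q : ℝⁿ → ℝ be polynomials. If for all ε > 0, ∑_{k ∈ (ℤ≥0)ⁿ} p(k) ρ(ε⁻¹ u·(k+1/2)) = ∑_{k ∈ (ℤ≥0)ⁿ} q(k) ρ(ε⁻¹ u·(k+1/2)), then p(k) = q(k) for all k ∈ (ℤ≥0)ⁿ, hence p = q. -/

import Mathlib

open Filter Function Set MvPolynomial

/-!
Put `E k = u·(k+1/2)`. Non-resonance makes `E` injective and positivity of `u` makes it tend to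
infinity, so if `p - q` does not vanish on the lattice there is a lattice point `k₀` of least
energy where it does not, together with an energy gap `c > E k₀` below which no other such point
lies. Choosing `x` in the positive support of `ρ` above `(E k₀ / c) · sup (support ρ ∩ (0, ∞))`
and the scale `ε = E k₀ / x` leaves exactly one nonzero term, `(p - q)(k₀) ρ(x)`, in the
difference of the cutoff sums, a contradiction. A polynomial vanishing on `ℕⁿ` is zero.
-/

theorem MvPolynomial.eq_of_eval_natCast_eq {R σ : Type*} [CommRing R] [IsDomain R] [CharZero R]
    {p q : MvPolynomial σ R}
    (h : ∀ k : σ → ℕ, eval (fun j => (k j : R)) p = eval (fun j => (k j : R)) q) : p = q := by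
  refine funext_set (fun _ => range ((↑) : ℕ → R))
    (fun _ => infinite_range_of_injective Nat.cast_injective) fun x hx => ?_
  choose k hk using fun j => hx j (mem_univ j)
  simpa only [hk] using h k

theorem Filter.Tendsto.exists_within_lt_forall_ne_le {α β : Type*} [LinearOrder β] [NoMaxOrder β]
    {f : α → β} (hf : Tendsto f cofinite atTop) (hinj : Injective f) {s : Set α}
    (hs : s.Nonempty) : ∃ a₀ ∈ s, ∃ c, f a₀ < c ∧ ∀ a ∈ s, a ≠ a₀ → c ≤ f a := by
  obtain ⟨a₀, ha₀, hmin⟩ := hf.exists_within_forall_le hs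
  by_cases hrest : (s \ {a₀}).Nonempty
  · obtain ⟨a₁, ⟨ha₁, hne⟩, hmin₁⟩ := hf.exists_within_forall_le hrest
    exact ⟨a₀, ha₀, f a₁, (hmin a₁ ha₁).lt_of_ne fun h => hne (hinj h).symm,
      fun a ha hne => hmin₁ a ⟨ha, hne⟩⟩
  · obtain ⟨c, hc⟩ := exists_gt (f a₀)
    exact ⟨a₀, ha₀, c, hc, fun a ha hne => absurd ⟨a, ha, hne⟩ hrest⟩

lemma exists_cutoff_scale {ρ : ℝ → ℝ} (hρ : BddAbove (support ρ)) {a : ℝ} (ha : 0 < a)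
    (hρa : ρ a ≠ 0) {v c : ℝ} (hv : 0 < v) (hvc : v < c) :
    ∃ ε > 0, ρ (ε⁻¹ * v) ≠ 0 ∧ ∀ y, c ≤ y → ρ (ε⁻¹ * y) = 0 := by
  set S := support ρ ∩ Ioi 0
  have hSbdd : BddAbove S := hρ.mono inter_subset_left
  have hs : 0 < sSup S := ha.trans_le (le_csSup hSbdd ⟨hρa, ha⟩)
  have hlt : sSup S * (v / c) < sSup S :=
    mul_lt_of_lt_one_right hs ((div_lt_one (hv.trans hvc)).2 hvc)
  obtain ⟨x, ⟨hρx, hx : 0 < x⟩, hxS⟩ := exists_lt_of_lt_csSup (⟨a, hρa, ha⟩ : S.Nonempty) hlt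
  refine ⟨v / x, div_pos hv hx, by rwa [inv_div, div_mul_cancel₀ _ hv.ne'], fun y hy => ?_⟩
  by_contra hne
  have hy₀ : 0 < y := hv.trans_le (hvc.le.trans hy)
  have hle := le_csSup hSbdd ⟨hne, show 0 < (v / x)⁻¹ * y by positivity⟩
  rw [inv_div, div_mul_eq_mul_div, div_le_iff₀ hv] at hle
  rw [← mul_div_assoc, div_lt_iff₀ (hv.trans hvc)] at hxS
  nlinarith [mul_le_mul_of_nonneg_left hy hx.le]

section Cutoff

variable {ι : Type*} {E : ι → ℝ} {ρ : ℝ → ℝ}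

lemma summable_mul_cutoff (hE : Tendsto E cofinite atTop) (hρ : BddAbove (support ρ))
    (f : ι → ℝ) {ε : ℝ} (hε : 0 < ε) : Summable fun k => f k * ρ (ε⁻¹ * E k) := by
  obtain ⟨b, hb⟩ := hρ
  refine summable_of_hasFiniteSupport ((eventually_cofinite.1
    (hE.eventually_gt_atTop (ε * b))).subset fun k hk hlt => hk (mul_eq_zero_of_right _ ?_))
  have hbk : b < ε⁻¹ * E k := by rwa [lt_inv_mul_iff₀ hε]
  exact notMem_support.1 fun h => (hb h).not_gt hbk

theorem eq_of_forall_tsum_mul_cutoff_eq (hE : Tendsto E cofinite atTop) (hinj : Injective E)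
    (hpos : ∀ k, 0 < E k) (hρ : BddAbove (support ρ)) {a : ℝ} (ha : 0 < a) (hρa : ρ a ≠ 0)
    {f f' : ι → ℝ} (h : ∀ ε > 0, ∑' k, f k * ρ (ε⁻¹ * E k) = ∑' k, f' k * ρ (ε⁻¹ * E k)) :
    f = f' := by
  by_contra hne
  obtain ⟨k₀, hk₀, c, hc, hgap⟩ :=
    hE.exists_within_lt_forall_ne_le hinj (s := {k | f k ≠ f' k})
      (by simpa [funext_iff, Set.Nonempty] using hne)
  obtain ⟨ε, hε, hρk₀, hρc⟩ := exists_cutoff_scale hρ ha hρa (hpos k₀) hc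
  have hsum : ∑' k, (f k - f' k) * ρ (ε⁻¹ * E k) = 0 := by
    simp only [sub_mul]
    rw [(summable_mul_cutoff hE hρ f hε).tsum_sub (summable_mul_cutoff hE hρ f' hε), h ε hε,
      sub_self]
  rw [tsum_eq_single k₀ fun k hk => ?_] at hsum
  · exact mul_ne_zero (sub_ne_zero.2 hk₀) hρk₀ hsum
  · by_cases hfk : f k = f' k
    · rw [hfk, sub_self, zero_mul]
    · rw [hρc _ (hgap k hfk hk), mul_zero]

end Cutoff

section OscillatorEnergy

variable {ι : Type*} [Fintype ι] {u : ι → ℝ}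

noncomputable def oscillatorEnergy (u : ι → ℝ) (k : ι → ℕ) : ℝ :=
  ∑ j, u j * ((k j : ℝ) + 1 / 2)

lemma oscillatorEnergy_pos [Nonempty ι] (hu : ∀ j, 0 < u j) (k : ι → ℕ) :
    0 < oscillatorEnergy u k :=
  Finset.sum_pos (fun j _ => mul_pos (hu j) (by positivity)) Finset.univ_nonempty

lemma tendsto_oscillatorEnergy (hu : ∀ j, 0 < u j) :
    Tendsto (oscillatorEnergy u) cofinite atTop := by
  rw [← coprodᵢ_cofinite, Filter.coprodᵢ, tendsto_iSup]
  intro j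
  have hj : Tendsto (fun m : ℕ => u j * m) cofinite atTop := by
    rw [Nat.cofinite_eq_atTop]
    exact tendsto_natCast_atTop_atTop.const_mul_atTop (hu j)
  refine tendsto_atTop_mono (fun k => ?_) (hj.comp tendsto_comap)
  calc u j * (k j : ℝ) ≤ u j * ((k j : ℝ) + 1 / 2) :=
        mul_le_mul_of_nonneg_left (by linarith) (hu j).le
    _ ≤ oscillatorEnergy u k :=
      Finset.single_le_sum (f := fun j => u j * ((k j : ℝ) + 1 / 2))
        (fun i _ => (mul_pos (hu i) (by positivity)).le) (Finset.mem_univ j)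

lemma oscillatorEnergy_injective
    (hu : ∀ α : ι → ℤ, ∑ j, (α j : ℝ) * u j = 0 → α = 0) : Injective (oscillatorEnergy u) := by
  intro k k' hkk'
  have hα := hu (fun j => (k j : ℤ) - k' j) <| by
    rw [← sub_eq_zero.2 hkk', oscillatorEnergy, oscillatorEnergy, ← Finset.sum_sub_distrib]
    exact Finset.sum_congr rfl fun j _ => by push_cast; ring
  funext j
  exact_mod_cast sub_eq_zero.1 (congrFun hα j)

end OscillatorEnergy

theorem polynomial_recovery_from_cutoff_sums (n : ℕ) (u : Fin n → ℝ)
    (hpos : ∀ j, 0 < u j)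
    (hu : ∀ α : Fin n → ℤ, (∑ j, (α j : ℝ) * u j) = 0 → α = 0)
    (ρ : ℝ → ℝ) (hρ1 : ∀ x ∈ Set.Icc (-(1:ℝ)/2) (1/2), ρ x = 1)
    (hρ0 : ∀ x : ℝ, x ∉ Set.Icc (-1 : ℝ) 1 → ρ x = 0)
    (p q : MvPolynomial (Fin n) ℝ)
    (h : ∀ ε > (0:ℝ),
      (∑' k : Fin n → ℕ,
          MvPolynomial.eval (fun j => (k j : ℝ)) p *
            ρ (ε⁻¹ * ∑ j, u j * ((k j : ℝ) + 1/2)))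
        = ∑' k : Fin n → ℕ,
            MvPolynomial.eval (fun j => (k j : ℝ)) q *
              ρ (ε⁻¹ * ∑ j, u j * ((k j : ℝ) + 1/2))) :
    (∀ k : Fin n → ℕ,
        MvPolynomial.eval (fun j => (k j : ℝ)) p =
          MvPolynomial.eval (fun j => (k j : ℝ)) q) ∧ p = q := by
  have hlattice : ∀ k : Fin n → ℕ,
      eval (fun j => (k j : ℝ)) p = eval (fun j => (k j : ℝ)) q := by
    rcases isEmpty_or_nonempty (Fin n) with hn | hn
    · -- the lattice is a single point, of energy `0`
      intro k
      have hρ0' : ρ 0 = 1 := hρ1 0 ⟨by norm_num, by norm_num⟩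
      have hk := h 1 one_pos
      rwa [tsum_eq_single k fun k' hk' => absurd (Subsingleton.elim k' k) hk',
        tsum_eq_single k fun k' hk' => absurd (Subsingleton.elim k' k) hk', Finset.univ_eq_empty,
        Finset.sum_empty, mul_zero, hρ0', mul_one, mul_one] at hk
    · have hρ : BddAbove (support ρ) :=
        ⟨1, fun x hx => not_lt.1 fun hx1 => hx (hρ0 x fun hx' => hx1.not_ge hx'.2)⟩
      have hρhalf : ρ (1 / 2) ≠ 0 := by rw [hρ1 _ ⟨by norm_num, le_rfl⟩]; exact one_ne_zero
      exact congrFun <| eq_of_forall_tsum_mul_cutoff_eq (tendsto_oscillatorEnergy hpos)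
        (oscillatorEnergy_injective hu) (oscillatorEnergy_pos hpos) hρ one_half_pos hρhalf h
  exact ⟨hlattice, MvPolynomial.eq_of_eval_natCast_eq hlattice⟩
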